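/- For every prime ideal P of A not containing f^{-1}(J), the localization of A⋈^f J at the prime ideal P'^f := {(p, f(p)+j) : p ∈ P, j ∈ J} is canonically isomorphic, as a ring, to the localization A_P of A at P; the isomorphism is induced by the projection p_A : A⋈^f J → A. -/

import Mathlib

/-!
The projection `p_A : A ⋈^f J → A` is surjective with kernel `0 × J`, and `P'^f = p_A⁻¹(P)`.
For `t ∈ f⁻¹(J) \ P` the element `(t, 0)` lies outside `P'^f` and annihilates `0 × J`, so the
kernel dies after localizing at `P'^f`; hence `A_P` satisfies the universal property of the
localization of `A ⋈^f J` at `P'^f`.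
-/

section Amalgamation

variable {A B : Type*} [CommRing A] [CommRing B]

/-- The amalgamation `A ⋈^f J` of `A` with `B` along the ideal `J` of `B` with respect to
the ring homomorphism `f : A → B`, realized as the subring
`{(a, f a + j) | a ∈ A, j ∈ J}` of `A × B`. -/
def amalg (f : A →+* B) (J : Ideal B) : Subring (A × B) where
  carrier := {x : A × B | x.2 - f x.1 ∈ J}
  zero_mem' := by simp
  one_mem' := by simp
  add_mem' := by
    intro x y hx hy
    simp only [Set.mem_setOf_eq, Prod.fst_add, Prod.snd_add, map_add] at *
    have h : x.2 + y.2 - (f x.1 + f y.1) = x.2 - f x.1 + (y.2 - f y.1) := by ring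
    rw [h]; exact J.add_mem hx hy
  neg_mem' := by
    intro x hx
    simp only [Set.mem_setOf_eq, Prod.fst_neg, Prod.snd_neg, map_neg] at *
    have h : -x.2 - -f x.1 = -(x.2 - f x.1) := by ring
    rw [h]; exact J.neg_mem hx
  mul_mem' := by
    intro x y hx hy
    simp only [Set.mem_setOf_eq, Prod.fst_mul, Prod.snd_mul, map_mul] at *
    have h : x.2 * y.2 - f x.1 * f y.1 = x.2 * (y.2 - f y.1) + (x.2 - f x.1) * f y.1 := by ring
    rw [h]
    exact J.add_mem (J.mul_mem_left _ hy) (J.mul_mem_right _ hx)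

lemma mem_amalg_iff (f : A →+* B) (J : Ideal B) (x : A × B) :
    x ∈ amalg f J ↔ x.2 - f x.1 ∈ J := Iff.rfl

/-- The natural projection `p_A : A ⋈^f J → A`. -/
def pA (f : A →+* B) (J : Ideal B) : amalg f J →+* A :=
  (RingHom.fst A B).comp (amalg f J).subtype

/-- The natural projection `p_B : A ⋈^f J → B`. -/
def pB (f : A →+* B) (J : Ideal B) : amalg f J →+* B :=
  (RingHom.snd A B).comp (amalg f J).subtype

/-- For an ideal `P` of `A`, the ideal `P'^f = P ⋈^f J = {(p, f p + j) | p ∈ P, j ∈ J}`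
of `A ⋈^f J`. -/
def idealPf (f : A →+* B) (J : Ideal B) (P : Ideal A) : Ideal (amalg f J) :=
  Submodule.copy (Ideal.comap (pA f J) P)
    {x : amalg f J | ∃ p ∈ P, ∃ j ∈ J, (x : A × B) = (p, f p + j)}
    (by
      ext x
      simp only [Set.mem_setOf_eq, SetLike.mem_coe, Ideal.mem_comap]
      constructor
      · rintro ⟨p, hp, j, hj, hx⟩
        have h1 : pA f J x = p := by
          show (x : A × B).1 = p
          rw [hx]
        rw [h1]; exact hp
      · intro hx
        refine ⟨(x : A × B).1, hx, (x : A × B).2 - f (x : A × B).1,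
          (mem_amalg_iff f J _).mp x.2, ?_⟩
        ext <;> simp)

end Amalgamation

theorem IsLocalization.comap_of_surjective {R S T : Type*} [CommRing R] [CommRing S]
    [CommRing T] [Algebra R S] [Algebra S T] [Algebra R T] [IsScalarTower R S T]
    (M : Submonoid S) [IsLocalization M T] (hsurj : Function.Surjective (algebraMap R S))
    {s : R} (hs : s ∈ M.comap (algebraMap R S))
    (hann : ∀ k ∈ RingHom.ker (algebraMap R S), s * k = 0) :
    IsLocalization (M.comap (algebraMap R S)) T where
  map_units := by
    rintro ⟨y, hy⟩
    rw [IsScalarTower.algebraMap_apply R S T]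
    exact IsLocalization.map_units (M := M) T ⟨_, hy⟩
  surj z := by
    obtain ⟨⟨a, ⟨m, hmM⟩⟩, h⟩ := IsLocalization.surj M z
    obtain ⟨a, rfl⟩ := hsurj a
    obtain ⟨m, rfl⟩ := hsurj m
    refine ⟨(a, ⟨m, hmM⟩), ?_⟩
    simpa only [IsScalarTower.algebraMap_apply R S T] using h
  exists_of_eq {x y} h := by
    rw [IsScalarTower.algebraMap_apply R S T, IsScalarTower.algebraMap_apply R S T y] at h
    obtain ⟨⟨c, hc⟩, hcxy⟩ := IsLocalization.exists_of_eq (M := M) h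
    obtain ⟨c, rfl⟩ := hsurj c
    have hker : c * x - c * y ∈ RingHom.ker (algebraMap R S) := by
      simp only [RingHom.mem_ker, map_sub, map_mul, hcxy, sub_self]
    refine ⟨⟨s * c, by simpa only [Submonoid.mem_comap, map_mul] using M.mul_mem hs hc⟩, ?_⟩
    linear_combination hann _ hker

section Amalgamation

variable {A B : Type*} [CommRing A] [CommRing B] (f : A →+* B) (J : Ideal B)

theorem pA_surjective : Function.Surjective (pA f J) :=
  fun a ↦ ⟨⟨(a, f a), by simp [mem_amalg_iff]⟩, rfl⟩

theorem idealPf_eq_comap (P : Ideal A) : idealPf f J P = P.comap (pA f J) :=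
  Submodule.copy_eq _ _ _

theorem exists_mul_ker_pA_eq_zero {t : A} (ht : t ∈ J.comap f) :
    ∃ s : amalg f J, pA f J s = t ∧ ∀ k ∈ RingHom.ker (pA f J), s * k = 0 := by
  refine ⟨⟨(t, 0), by simpa [mem_amalg_iff] using ht⟩, rfl, fun k hk ↦ ?_⟩
  ext
  · exact mul_eq_zero_of_right t hk
  · exact zero_mul _

end Amalgamation

/-- For a prime `P` of `A` not containing `f⁻¹(J)`, the localization of `A ⋈^f J` at
`P'^f` is canonically isomorphic to `A_P`, via the map induced by `p_A`. -/
theorem stmt11 {A B : Type*} [CommRing A] [CommRing B] (f : A →+* B) (J : Ideal B)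
    (P : Ideal A) [P.IsPrime] (hP : ¬ Ideal.comap f J ≤ P) [(idealPf f J P).IsPrime] :
    ∃ e : Localization.AtPrime (idealPf f J P) ≃+* Localization.AtPrime P,
      ∀ x : amalg f J,
        e (algebraMap (amalg f J) (Localization.AtPrime (idealPf f J P)) x) =
          algebraMap A (Localization.AtPrime P) (pA f J x) := by
  obtain ⟨t, htJ, htP⟩ := Set.not_subset.mp hP
  obtain ⟨s, hst, hann⟩ := exists_mul_ker_pA_eq_zero f J htJ
  let _ : Algebra (amalg f J) A := (pA f J).toAlgebra
  let _ : Algebra (amalg f J) (Localization.AtPrime P) :=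
    ((algebraMap A (Localization.AtPrime P)).comp (pA f J)).toAlgebra
  have := IsScalarTower.of_algebraMap_eq' (R := amalg f J) (S := A)
    (A := Localization.AtPrime P) rfl
  have hprimeCompl : (idealPf f J P).primeCompl = P.primeCompl.comap (pA f J) := by
    ext x
    simp [Ideal.primeCompl, idealPf_eq_comap]
  have : IsLocalization (idealPf f J P).primeCompl (Localization.AtPrime P) := by
    rw [hprimeCompl]
    exact IsLocalization.comap_of_surjective P.primeCompl (pA_surjective f J)
      (show pA f J s ∉ P from hst ▸ htP) hann
  let e := IsLocalization.algEquiv (idealPf f J P).primeCompl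
    (Localization.AtPrime (idealPf f J P)) (Localization.AtPrime P)
  exact ⟨e.toRingEquiv, e.commutes⟩
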